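/- arXiv:1606.02224 — 2 statements merged into one kernel-verified Lean document; each statement's English description precedes it below -/
import Mathlib

section
/- Suppose X_f ⊆ X, and K ∈ ℝ^{m×n} is a terminal feedback gain such that for every x ∈ X_f one has K x ∈ U and (A+BK) x ∈ X_f. If (u_0,…,u_{N−1}) is a feasible input sequence for a state x_0, with resulting states x_0,…,x_N, then the shifted sequence (u_1,…,u_{N−1}, K x_N) is a feasible input sequence for the successor state x_1 = A x_0 + B u_0; in particular its resulting states lie in X, its inputs lie in U, and its terminal state (A+BK) x_N lies in X_f. -/
open Matrix

/-- State trajectory of the discrete-time linear system `x(k+1) = A x(k) + B u(k)`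
starting from `x0` under the input sequence `u`. -/
def traj {n m : ℕ} (A : Matrix (Fin n) (Fin n) ℝ) (B : Matrix (Fin n) (Fin m) ℝ)
    (x0 : Fin n → ℝ) (u : ℕ → Fin m → ℝ) : ℕ → Fin n → ℝ
  | 0 => x0
  | k + 1 => A.mulVec (traj A B x0 u k) + B.mulVec (u k)

/-- `u` is a feasible input sequence of horizon `N` for the state `x0`:
inputs lie in `U`, the resulting states lie in `X`, and the terminal state lies in `Xf`. -/
def Feasible {n m : ℕ} (A : Matrix (Fin n) (Fin n) ℝ) (B : Matrix (Fin n) (Fin m) ℝ)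
    (X : Set (Fin n → ℝ)) (U : Set (Fin m → ℝ)) (Xf : Set (Fin n → ℝ))
    (N : ℕ) (x0 : Fin n → ℝ) (u : ℕ → Fin m → ℝ) : Prop :=
  (∀ k < N, u k ∈ U) ∧ (∀ k ≤ N, traj A B x0 u k ∈ X) ∧ traj A B x0 u N ∈ Xf

/-- If `Xf ⊆ X` and `K` is a terminal feedback gain keeping `Xf` invariant with
admissible inputs, then the shifted sequence `(u_1, …, u_{N-1}, K x_N)` is feasible for
the successor state `x_1 = A x_0 + B u_0`; in particular its terminal state is
`(A + B K) x_N`. -/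
theorem shifted_sequence_feasible {n m N : ℕ} (hN : 1 ≤ N)
    (A : Matrix (Fin n) (Fin n) ℝ) (B : Matrix (Fin n) (Fin m) ℝ)
    (X : Set (Fin n → ℝ)) (U : Set (Fin m → ℝ)) (Xf : Set (Fin n → ℝ))
    (K : Matrix (Fin m) (Fin n) ℝ)
    (hXfX : Xf ⊆ X)
    (hK : ∀ x ∈ Xf, K.mulVec x ∈ U ∧ A.mulVec x + B.mulVec (K.mulVec x) ∈ Xf)
    (x0 : Fin n → ℝ) (u : ℕ → Fin m → ℝ)
    (hfeas : Feasible A B X U Xf N x0 u) :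
    Feasible A B X U Xf N (A.mulVec x0 + B.mulVec (u 0))
      (fun k => if k + 1 < N then u (k + 1) else K.mulVec (traj A B x0 u N)) ∧
    traj A B (A.mulVec x0 + B.mulVec (u 0))
        (fun k => if k + 1 < N then u (k + 1) else K.mulVec (traj A B x0 u N)) N =
      A.mulVec (traj A B x0 u N) + B.mulVec (K.mulVec (traj A B x0 u N)) := by

  obtain ⟨M, rfl⟩ : ∃ M, N = M + 1 := ⟨N - 1, (Nat.succ_pred_eq_of_pos hN).symm⟩
  obtain ⟨hU, hX, hXf⟩ := hfeas
  set u' : ℕ → Fin m → ℝ :=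
    fun k => if k + 1 < M + 1 then u (k + 1) else K.mulVec (traj A B x0 u (M + 1)) with hu'
  set x1 := A.mulVec x0 + B.mulVec (u 0) with hx1
  have key : ∀ k, k ≤ M → traj A B x1 u' k = traj A B x0 u (k + 1) := by
    intro k hk
    induction k with
    | zero => rfl
    | succ j ih =>
      have hj : j ≤ M := Nat.le_of_succ_le hk
      have hlt : j + 1 < M + 1 := Nat.succ_lt_succ (Nat.lt_of_succ_le hk)
      show A.mulVec (traj A B x1 u' j) + B.mulVec (u' j) = _
      rw [ih hj, hu']
      simp only [if_pos hlt]
      rfl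
  have hterm : traj A B x1 u' (M + 1) =
      A.mulVec (traj A B x0 u (M + 1)) + B.mulVec (K.mulVec (traj A B x0 u (M + 1))) := by
    show A.mulVec (traj A B x1 u' M) + B.mulVec (u' M) = _
    rw [key M le_rfl, hu']
    simp
  refine ⟨⟨?_, ?_, ?_⟩, hterm⟩
  · intro k hk
    by_cases h : k + 1 < M + 1
    · show (if k + 1 < M + 1 then u (k + 1) else K.mulVec (traj A B x0 u (M + 1))) ∈ U
      rw [if_pos h]; exact hU (k + 1) h
    · show (if k + 1 < M + 1 then u (k + 1) else K.mulVec (traj A B x0 u (M + 1))) ∈ U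
      rw [if_neg h]; exact (hK _ hXf).1
  · intro k hk
    rcases Nat.lt_or_ge k (M + 1) with h | h
    · rw [key k (Nat.lt_succ_iff.mp h)]
      exact hX (k + 1) (Nat.succ_le_succ (Nat.lt_succ_iff.mp h))
    · have : k = M + 1 := le_antisymm hk h
      rw [this, hterm]
      exact hXfX (hK _ hXf).2
  · rw [hterm]
    exact (hK _ hXf).2
end

section
/- Suppose X_f ⊆ X, and K ∈ ℝ^{m×n} is a terminal feedback gain such that for every x ∈ X_f one has K x ∈ U and (A+BK) x ∈ X_f. Let x_0 ∈ ℝ^n admit a feasible input sequence, and let (v_t)_{t∈ℕ} be any sequence of applied inputs such that for each t, v_t is the first element of some feasible input sequence for x_t, where x_{t+1} = A x_t + B v_t. Then for every t ∈ ℕ there exists a feasible input sequence for x_t (recursive feasibility of the closed loop). -/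
open Matrix

/-!
Shifting a feasible input sequence by one step and appending the terminal feedback evaluated at
the terminal state gives a feasible input sequence for the successor state: its first `N` states
are the states `x_1, …, x_N` of the old trajectory, and its new terminal state stays in `X_f ⊆ X`
because `X_f` is invariant under the terminal feedback. Since the applied input is the first element of a feasible
sequence, induction on `t` propagates feasibility along the closed loop.
-/

section Shift

variable {n m : ℕ} (A : Matrix (Fin n) (Fin n) ℝ) (B : Matrix (Fin n) (Fin m) ℝ)

theorem traj_succ (x0 : Fin n → ℝ) (u : ℕ → Fin m → ℝ) (k : ℕ) :
    traj A B x0 u (k + 1) = traj A B (A *ᵥ x0 + B *ᵥ u 0) (fun j => u (j + 1)) k := by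
  induction k with
  | zero => rfl
  | succ k ih => rw [traj, ih]; rfl

theorem traj_congr {x0 : Fin n → ℝ} {u u' : ℕ → Fin m → ℝ} {k : ℕ} (h : ∀ j < k, u j = u' j) :
    traj A B x0 u k = traj A B x0 u' k := by
  induction k with
  | zero => rfl
  | succ k ih =>
    rw [traj, traj, ih fun j hj => h j (Nat.lt_succ_of_lt hj), h k (Nat.lt_succ_self k)]

def shiftedInput (κ : (Fin n → ℝ) → Fin m → ℝ) (N : ℕ) (x0 : Fin n → ℝ) (u : ℕ → Fin m → ℝ) :
    ℕ → Fin m → ℝ :=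
  fun j => if j + 1 < N then u (j + 1) else κ (traj A B x0 u N)

variable {A B} {κ : (Fin n → ℝ) → Fin m → ℝ} {N : ℕ} {x0 : Fin n → ℝ} {u : ℕ → Fin m → ℝ}

theorem traj_shiftedInput_of_lt {k : ℕ} (hk : k < N) :
    traj A B (A *ᵥ x0 + B *ᵥ u 0) (shiftedInput A B κ N x0 u) k = traj A B x0 u (k + 1) := by
  rw [traj_succ]
  exact traj_congr A B fun j hj => if_pos (by omega)

theorem traj_shiftedInput_horizon (hN : 1 ≤ N) :
    traj A B (A *ᵥ x0 + B *ᵥ u 0) (shiftedInput A B κ N x0 u) N =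
      A *ᵥ traj A B x0 u N + B *ᵥ κ (traj A B x0 u N) := by
  obtain ⟨M, rfl⟩ := Nat.exists_eq_add_of_le' hN
  rw [traj, traj_shiftedInput_of_lt (Nat.lt_succ_self M), shiftedInput, if_neg (lt_irrefl _)]

theorem Feasible.shift {X : Set (Fin n → ℝ)} {U : Set (Fin m → ℝ)} {Xf : Set (Fin n → ℝ)}
    (hXfX : Xf ⊆ X) (hκ : ∀ x ∈ Xf, κ x ∈ U ∧ A *ᵥ x + B *ᵥ κ x ∈ Xf) (hN : 1 ≤ N)
    (hu : Feasible A B X U Xf N x0 u) :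
    Feasible A B X U Xf N (A *ᵥ x0 + B *ᵥ u 0) (shiftedInput A B κ N x0 u) := by
  obtain ⟨hU, hX, hXf⟩ := hu
  have hlast : traj A B (A *ᵥ x0 + B *ᵥ u 0) (shiftedInput A B κ N x0 u) N ∈ Xf := by
    rw [traj_shiftedInput_horizon hN]
    exact (hκ _ hXf).2
  refine ⟨fun k _ => ?_, fun k hk => ?_, hlast⟩
  · unfold shiftedInput
    split_ifs with h
    · exact hU (k + 1) h
    · exact (hκ _ hXf).1
  · rcases hk.lt_or_eq with hk | rfl
    · rw [traj_shiftedInput_of_lt hk]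
      exact hX (k + 1) hk
    · exact hXfX hlast

end Shift

/-- Recursive feasibility of the closed loop: if `x_0` admits a feasible input sequence
and at each time the applied input `v_t` is the first element of some feasible input
sequence for the current state `x_t`, then every closed-loop state `x_t` admits a
feasible input sequence. -/
theorem recursive_feasibility {n m N : ℕ} (hN : 1 ≤ N)
    (A : Matrix (Fin n) (Fin n) ℝ) (B : Matrix (Fin n) (Fin m) ℝ)
    (X : Set (Fin n → ℝ)) (U : Set (Fin m → ℝ)) (Xf : Set (Fin n → ℝ))
    (K : Matrix (Fin m) (Fin n) ℝ)
    (hXfX : Xf ⊆ X)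
    (hK : ∀ x ∈ Xf, K.mulVec x ∈ U ∧ A.mulVec x + B.mulVec (K.mulVec x) ∈ Xf)
    (x0 : Fin n → ℝ)
    (hx0 : ∃ u, Feasible A B X U Xf N x0 u)
    (v : ℕ → Fin m → ℝ) (x : ℕ → Fin n → ℝ)
    (hxinit : x 0 = x0)
    (hdyn : ∀ t, x (t + 1) = A.mulVec (x t) + B.mulVec (v t))
    (hv : ∀ t, (∃ u, Feasible A B X U Xf N (x t) u) →
      ∃ u, Feasible A B X U Xf N (x t) u ∧ v t = u 0) :
    ∀ t, ∃ u, Feasible A B X U Xf N (x t) u := by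
  intro t
  induction t with
  | zero => rwa [hxinit]
  | succ t ih =>
    obtain ⟨u, hu, hvt⟩ := hv t ih
    rw [hdyn t, hvt]
    exact ⟨_, hu.shift hXfX hK hN⟩
end
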